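/- arXiv:2208.12476 — 10 statements merged into one kernel-verified Lean document; each statement's English description precedes it below -/
import Mathlib

section
/- Let N ≥ 1 and let A be an N×N matrix with entries in {0,1}, regarded as an integer matrix, and assume A is irreducible and not a permutation matrix. The map ℤ^N → ℤ^{N+1}, x ↦ (0, x), sends the subgroup (I−Â)ℤ^N into (I−A_1)ℤ^{N+1}, and it induces a group isomorphism ξ^0 : ℤ^N/(I−Â)ℤ^N → ℤ^{N+1}/(I−A_1)ℤ^{N+1} satisfying: (i) ξ^0 ∘ ι̂_A = ι_{A_1}; (ii) q_{A_1} ∘ ξ^0 = q̂_A; and (iii) ξ^0(ι̂_A(1) + [1_N]) = [1_{N+1}], where 1_N = (1,…,1) ∈ ℤ^N and 1_{N+1} = (1,…,1) ∈ ℤ^{N+1}. -/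
open Matrix

noncomputable section

/-- `A` has entries in `{0,1}`. -/
def ZeroOneEntries {N : ℕ} (A : Matrix (Fin N) (Fin N) ℤ) : Prop :=
  ∀ i j, A i j = 0 ∨ A i j = 1

/-- `A` is irreducible: for all `i j` there is `m ≥ 1` with `(A^m) i j ≥ 1`. -/
def IsIrreducibleMatrix {N : ℕ} (A : Matrix (Fin N) (Fin N) ℤ) : Prop :=
  ∀ i j, ∃ m : ℕ, 1 ≤ m ∧ 1 ≤ (A ^ m) i j

/-- `A` is a permutation matrix: every row and column has exactly one nonzero entry. -/
def IsPermutationMatrix {N : ℕ} (A : Matrix (Fin N) (Fin N) ℤ) : Prop :=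
  (∀ i, ∃! j, A i j ≠ 0) ∧ (∀ j, ∃! i, A i j ≠ 0)

/-- The matrix `R₁` whose first row is `(1,…,1)` and whose other rows vanish. -/
def R1 (N : ℕ) [NeZero N] : Matrix (Fin N) (Fin N) ℤ :=
  Matrix.of fun i _ => if i = 0 then 1 else 0

/-- `Â = A + R₁ - A·R₁`. -/
def Ahat {N : ℕ} [NeZero N] (A : Matrix (Fin N) (Fin N) ℤ) : Matrix (Fin N) (Fin N) ℤ :=
  A + R1 N - A * R1 N

/-- The subgroup `Mℤ^N = {Mx : x ∈ ℤ^N}` of `ℤ^N`. -/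
abbrev colSpan {N : ℕ} (M : Matrix (Fin N) (Fin N) ℤ) : Submodule ℤ (Fin N → ℤ) :=
  LinearMap.range M.mulVecLin

/-- The quotient group `ℤ^N / Mℤ^N`. -/
abbrev MQuot {N : ℕ} (M : Matrix (Fin N) (Fin N) ℤ) := (Fin N → ℤ) ⧸ colSpan M

/-- `s_A : ℤ^N → ℤ`, sum of coordinates. -/
def sA (N : ℕ) : (Fin N → ℤ) →ₗ[ℤ] ℤ := ∑ i : Fin N, LinearMap.proj i

lemma sA_apply {N : ℕ} (x : Fin N → ℤ) : sA N x = ∑ i, x i := by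
  simp [sA]

/-- `e₁ = (1,0,…,0) ∈ ℤ^N`. -/
def e1 (N : ℕ) [NeZero N] : Fin N → ℤ := Pi.single 0 1

/-- `i₁ : ℤ → ℤ^N`, `m ↦ (m,0,…,0)`. -/
def i1 (N : ℕ) [NeZero N] : ℤ →ₗ[ℤ] (Fin N → ℤ) :=
  LinearMap.toSpanSingleton ℤ _ (e1 N)

/-- `j_A : ℤ^N → ℤ^N`,
`(l₁,…,l_N) ↦ (-∑_{i=2}^N l_i, l₂, …, l_N)`. -/
def jA (N : ℕ) [NeZero N] : (Fin N → ℤ) →ₗ[ℤ] (Fin N → ℤ) where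
  toFun l := fun i => if i = 0 then -∑ k ∈ Finset.univ.erase 0, l k else l i
  map_add' a b := by
    funext i
    by_cases h : i = 0
    · simp only [h, reduceIte, Pi.add_apply, Finset.sum_add_distrib]
      ring
    · simp [h]
  map_smul' c a := by
    funext i
    by_cases h : i = 0 <;>
      simp [h, Finset.mul_sum, smul_eq_mul, mul_neg, mul_sub]

/-- The matrix `A₁` of size `N+1`, with first row `(1,…,1)`, first column `(1,0,…,0)ᵗ`,
and lower-right `N×N` block `A`. -/
def A1 {N : ℕ} (A : Matrix (Fin N) (Fin N) ℤ) : Matrix (Fin (N+1)) (Fin (N+1)) ℤ :=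
  Matrix.of fun i j =>
    Fin.cases 1 (fun i' => Fin.cases 0 (fun j' => A i' j') j) i

/-- `ℤ^N → ℤ^{N+1}`, `x ↦ (0, x)`. -/
def ext0 {N : ℕ} : (Fin N → ℤ) →ₗ[ℤ] (Fin (N+1) → ℤ) where
  toFun x := Fin.cons 0 x
  map_add' a b := by
    funext i
    refine Fin.cases ?_ (fun i' => ?_) i <;> simp
  map_smul' c a := by
    funext i
    refine Fin.cases ?_ (fun i' => ?_) i <;> simp

/-- `ℤ^{N+1} → ℤ^N`, deleting the first coordinate. -/
def tailL {N : ℕ} : (Fin (N+1) → ℤ) →ₗ[ℤ] (Fin N → ℤ) :=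
  LinearMap.funLeft ℤ ℤ Fin.succ

lemma sA_e1 {N : ℕ} [NeZero N] : sA N (e1 N) = 1 := by
  simp [sA_apply, e1, Pi.single_apply]

lemma R1_mulVec {N : ℕ} [NeZero N] (x : Fin N → ℤ) :
    (R1 N).mulVec x = (sA N x) • e1 N := by
  funext i
  by_cases h : i = 0 <;>
    simp [R1, e1, Matrix.mulVec, dotProduct, sA_apply, Pi.single_apply, h]

lemma jA_eq' {N : ℕ} [NeZero N] (x : Fin N → ℤ) :
    jA N x = x - (sA N x) • e1 N := by
  funext i
  by_cases h : i = 0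
  · subst h
    simp only [jA, LinearMap.coe_mk, AddHom.coe_mk, reduceIte, Pi.sub_apply, Pi.smul_apply,
      smul_eq_mul, sA_apply, e1, Pi.single_eq_same, mul_one]
    rw [← Finset.add_sum_erase _ x (Finset.mem_univ 0)]
    ring
  · simp [jA, e1, Pi.single_apply, h]

lemma jA_eq_mulVec {N : ℕ} [NeZero N] (x : Fin N → ℤ) :
    jA N x = (1 - R1 N).mulVec x := by
  rw [jA_eq', Matrix.sub_mulVec, Matrix.one_mulVec, R1_mulVec]

lemma one_sub_Ahat {N : ℕ} [NeZero N] (A : Matrix (Fin N) (Fin N) ℤ) :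
    1 - Ahat A = (1 - A) * (1 - R1 N) := by
  unfold Ahat
  noncomm_ring

lemma colSpan_Ahat_le {N : ℕ} [NeZero N] (A : Matrix (Fin N) (Fin N) ℤ) :
    colSpan (1 - Ahat A) ≤ colSpan (1 - A) := by
  rintro _ ⟨x, rfl⟩
  refine ⟨(1 - R1 N).mulVec x, ?_⟩
  rw [mulVecLin_apply, mulVecLin_apply, one_sub_Ahat, ← Matrix.mulVec_mulVec]

/-- `q̂_A : ℤ^N/(I-Â)ℤ^N → ℤ^N/(I-A)ℤ^N`, induced by the identity map of `ℤ^N`. -/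
def qHat {N : ℕ} [NeZero N] (A : Matrix (Fin N) (Fin N) ℤ) :
    MQuot (1 - Ahat A) →ₗ[ℤ] MQuot (1 - A) :=
  Submodule.liftQ _ (colSpan (1 - A)).mkQ
    (by simpa [Submodule.ker_mkQ] using colSpan_Ahat_le A)

/-- `ι̂_A : ℤ → ℤ^N/(I-Â)ℤ^N`, `m ↦ [(I-A)(m·e₁)]`. -/
def iotaHat {N : ℕ} [NeZero N] (A : Matrix (Fin N) (Fin N) ℤ) :
    ℤ →ₗ[ℤ] MQuot (1 - Ahat A) :=
  (colSpan (1 - Ahat A)).mkQ ∘ₗ (1 - A).mulVecLin ∘ₗ i1 N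

lemma e1_mem_kerHat {N : ℕ} [NeZero N] (A : Matrix (Fin N) (Fin N) ℤ) :
    e1 N ∈ LinearMap.ker (1 - Ahat A).mulVecLin := by
  rw [LinearMap.mem_ker, mulVecLin_apply, one_sub_Ahat, ← Matrix.mulVec_mulVec]
  have : (1 - R1 N).mulVec (e1 N) = 0 := by
    rw [Matrix.sub_mulVec, Matrix.one_mulVec, R1_mulVec, sA_e1, one_smul, sub_self]
  rw [this, Matrix.mulVec_zero]

lemma jA_mem_ker {N : ℕ} [NeZero N] (A : Matrix (Fin N) (Fin N) ℤ) (x : Fin N → ℤ)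
    (hx : x ∈ LinearMap.ker (1 - Ahat A).mulVecLin) :
    jA N x ∈ LinearMap.ker (1 - A).mulVecLin := by
  rw [LinearMap.mem_ker, mulVecLin_apply] at *
  rw [jA_eq_mulVec, Matrix.mulVec_mulVec, ← one_sub_Ahat]
  exact hx

lemma sA_jA {N : ℕ} [NeZero N] (x : Fin N → ℤ) : sA N (jA N x) = 0 := by
  rw [jA_eq', map_sub, LinearMap.map_smul, sA_e1, smul_eq_mul, mul_one, sub_self]

lemma jA_e1 {N : ℕ} [NeZero N] : jA N (e1 N) = 0 := by
  rw [jA_eq', sA_e1, one_smul, sub_self]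

lemma tailL_key {N : ℕ} (A : Matrix (Fin N) (Fin N) ℤ) (x : Fin (N+1) → ℤ) :
    tailL ((1 - A1 A).mulVec x) = (1 - A).mulVec (tailL x) := by
  funext i
  simp only [tailL, LinearMap.funLeft_apply, Function.comp, Matrix.mulVec, dotProduct,
    Matrix.sub_apply, Matrix.one_apply, A1, Matrix.of_apply, Fin.cases_succ,
    sub_mul, Finset.sum_sub_distrib]
  congr 1
  · rw [Fin.sum_univ_succ]
    simp [Fin.succ_ne_zero, Fin.succ_inj]
  · rw [Fin.sum_univ_succ]
    simp

/-- `ι_{A₁} : ℤ → ℤ^{N+1}/(I-A₁)ℤ^{N+1}`, `m ↦ [(0, (I-A)(m·e₁))]`. -/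
def iotaA1 {N : ℕ} [NeZero N] (A : Matrix (Fin N) (Fin N) ℤ) :
    ℤ →ₗ[ℤ] MQuot (1 - A1 A) :=
  (colSpan (1 - A1 A)).mkQ ∘ₗ ext0 ∘ₗ (1 - A).mulVecLin ∘ₗ i1 N

/-- `q_{A₁} : ℤ^{N+1}/(I-A₁)ℤ^{N+1} → ℤ^N/(I-A)ℤ^N`, induced by deleting the
first coordinate. -/
def qA1 {N : ℕ} (A : Matrix (Fin N) (Fin N) ℤ) :
    MQuot (1 - A1 A) →ₗ[ℤ] MQuot (1 - A) :=
  Submodule.liftQ _ ((colSpan (1 - A)).mkQ ∘ₗ tailL) (by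
    rintro _ ⟨x, rfl⟩
    simp only [LinearMap.mem_ker, LinearMap.comp_apply, mulVecLin_apply]
    rw [tailL_key]
    exact (Submodule.Quotient.mk_eq_zero _).2 ⟨tailL x, rfl⟩)


section Xi0

variable {N : ℕ} (A : Matrix (Fin N) (Fin N) ℤ)

lemma ext0_apply (x : Fin N → ℤ) : ext0 x = Fin.cons 0 x := rfl

lemma tailL_cons (a : ℤ) (y : Fin N → ℤ) : tailL (Fin.cons a y) = y := rfl

lemma one_sub_A1_mulVec (x : Fin (N+1) → ℤ) :
    (1 - A1 A) *ᵥ x = Fin.cons (-sA N (tailL x)) ((1 - A) *ᵥ tailL x) := by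
  refine Fin.cases ?_ (fun i => ?_) |> funext
  · simp [Matrix.mulVec, dotProduct, Fin.sum_univ_succ, A1, Matrix.one_apply, sA_apply, tailL,
      (Fin.succ_ne_zero _).symm]
  · rw [Fin.cons_succ]
    exact congrFun (tailL_key A x) i

variable [NeZero N]

lemma one_sub_Ahat_mulVec (u : Fin N → ℤ) :
    (1 - Ahat A) *ᵥ u = (1 - A) *ᵥ (u - sA N u • e1 N) := by
  rw [one_sub_Ahat, ← Matrix.mulVec_mulVec, ← jA_eq_mulVec, jA_eq']

/-- `(I-Â)ℤ^N` consists of the `(I-A)y` with `Σ yᵢ = 0`, which are exactly the `x` with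
`(0,x) ∈ (I-A₁)ℤ^{N+1}`. -/
lemma colSpan_one_sub_Ahat_eq_comap :
    colSpan (1 - Ahat A) = (colSpan (1 - A1 A)).comap ext0 := by
  ext x
  simp only [Submodule.mem_comap, LinearMap.mem_range, mulVecLin_apply]
  constructor
  · rintro ⟨u, rfl⟩
    refine ⟨Fin.cons 0 (u - sA N u • e1 N), ?_⟩
    rw [one_sub_A1_mulVec, tailL_cons, map_sub, map_smul, sA_e1, smul_eq_mul, mul_one,
      sub_self, neg_zero, one_sub_Ahat_mulVec, ext0_apply]
  · rintro ⟨w, hw⟩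
    rw [one_sub_A1_mulVec, ext0_apply, Fin.cons_inj] at hw
    refine ⟨tailL w, ?_⟩
    rw [one_sub_Ahat_mulVec, neg_eq_zero.mp hw.1, zero_smul, sub_zero, hw.2]

/-- Modulo `(I-A₁)ℤ^{N+1}`, `(a,y) ≡ (0, y + a(I-A)e₁)`, via the column `(I-A₁)(0,a e₁)`. -/
lemma mkQ_comp_ext0_surjective :
    Function.Surjective ((colSpan (1 - A1 A)).mkQ ∘ₗ ext0) := by
  intro c
  obtain ⟨w, rfl⟩ := Submodule.Quotient.mk_surjective _ c
  refine ⟨tailL w + w 0 • (1 - A) *ᵥ e1 N, (Submodule.Quotient.eq _).mpr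
    ⟨Fin.cons 0 (w 0 • e1 N), ?_⟩⟩
  rw [mulVecLin_apply, one_sub_A1_mulVec, tailL_cons, map_smul, sA_e1, Matrix.mulVec_smul]
  refine Fin.cases ?_ (fun i => ?_) |> funext <;> simp [ext0_apply, tailL]

def xi0 : MQuot (1 - Ahat A) ≃ₗ[ℤ] MQuot (1 - A1 A) :=
  (Submodule.quotEquivOfEq _ _ (by
      rw [LinearMap.ker_comp, Submodule.ker_mkQ, colSpan_one_sub_Ahat_eq_comap])).trans
    (LinearMap.quotKerEquivOfSurjective _ (mkQ_comp_ext0_surjective A))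

lemma xi0_mk (x : Fin N → ℤ) :
    xi0 A (Submodule.Quotient.mk x) = Submodule.Quotient.mk (ext0 x) := rfl

lemma qA1_comp_xi0 : qA1 A ∘ₗ (xi0 A : MQuot (1 - Ahat A) →ₗ[ℤ] MQuot (1 - A1 A)) = qHat A :=
  Submodule.linearMap_qext _ rfl

/-- `(0, (I-A)e₁ + 1_N)` and `1_{N+1}` differ by `(I-A₁)(0,e₁) = (-1, (I-A)e₁)`. -/
lemma xi0_iotaHat_one_add_one :
    xi0 A (iotaHat A 1 + Submodule.Quotient.mk (fun _ => 1)) =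
      Submodule.Quotient.mk (fun _ => 1) := by
  rw [iotaHat, LinearMap.comp_apply, LinearMap.comp_apply, Submodule.mkQ_apply,
    ← Submodule.Quotient.mk_add, xi0_mk, Submodule.Quotient.eq]
  refine ⟨Fin.cons 0 (e1 N), ?_⟩
  rw [mulVecLin_apply, one_sub_A1_mulVec, tailL_cons, sA_e1]
  refine Fin.cases ?_ (fun i => ?_) |> funext <;> simp [ext0_apply, i1, Matrix.sub_mulVec]

end Xi0

theorem stmt2_general (N : ℕ) [NeZero N] (A : Matrix (Fin N) (Fin N) ℤ) :
    (∀ v ∈ colSpan (1 - Ahat A), ext0 v ∈ colSpan (1 - A1 A)) ∧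
    ∃ ξ : MQuot (1 - Ahat A) ≃+ MQuot (1 - A1 A),
      (∀ x : Fin N → ℤ,
        ξ (Submodule.Quotient.mk x) = Submodule.Quotient.mk (ext0 x)) ∧
      (∀ m : ℤ, ξ (iotaHat A m) = iotaA1 A m) ∧
      (∀ c, qA1 A (ξ c) = qHat A c) ∧
      ξ (iotaHat A 1 + Submodule.Quotient.mk (fun _ => 1)) =
        Submodule.Quotient.mk (fun _ => 1) :=
  ⟨fun _ hv => (colSpan_one_sub_Ahat_eq_comap A).le hv, (xi0 A).toAddEquiv, xi0_mk A,
    fun _ => rfl, LinearMap.congr_fun (qA1_comp_xi0 A), xi0_iotaHat_one_add_one A⟩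

/-- The map `x ↦ (0,x)` sends `(I-Â)ℤ^N` into `(I-A₁)ℤ^{N+1}` and induces a group
isomorphism `ξ⁰ : ℤ^N/(I-Â)ℤ^N → ℤ^{N+1}/(I-A₁)ℤ^{N+1}` intertwining `ι̂_A` with
`ι_{A₁}` and `q̂_A` with `q_{A₁}`, and sending `ι̂_A(1) + [1_N]` to `[1_{N+1}]`. -/
theorem stmt2 (N : ℕ) [NeZero N] (A : Matrix (Fin N) (Fin N) ℤ)
    (h01 : ZeroOneEntries A) (hirr : IsIrreducibleMatrix A)
    (hnp : ¬ IsPermutationMatrix A) :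
    (∀ v ∈ colSpan (1 - Ahat A), ext0 v ∈ colSpan (1 - A1 A)) ∧
    ∃ ξ : MQuot (1 - Ahat A) ≃+ MQuot (1 - A1 A),
      (∀ x : Fin N → ℤ,
        ξ (Submodule.Quotient.mk x) = Submodule.Quotient.mk (ext0 x)) ∧
      (∀ m : ℤ, ξ (iotaHat A m) = iotaA1 A m) ∧
      (∀ c, qA1 A (ξ c) = qHat A c) ∧
      ξ (iotaHat A 1 + Submodule.Quotient.mk (fun _ => 1)) =
        Submodule.Quotient.mk (fun _ => 1) :=
  stmt2_general N A

end
end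

section
/- Let N ≥ 1 and let A be an N×N matrix with entries in {0,1}, regarded as an integer matrix. Define (N+1)×(N+1) integer matrices U and V (rows and columns indexed 0,1,…,N) by: U(0,0) = 1, U(1,0) = 1−A(1,1), U(i,0) = −A(i,1) for 2 ≤ i ≤ N, U(i,j) = δ_{ij} for j ≥ 1; and V(0,1) = 1 with V(0,j) = 0 for j ≠ 1, V(1,0) = −1, V(1,1) = 0, V(1,j) = −1 for 2 ≤ j ≤ N, V(i,j) = δ_{ij} for i ≥ 2. Then U and V are invertible over ℤ (their determinants are ±1), and U·(I−A_1)·V equals the (N+1)×(N+1) matrix whose (0,0) entry is 1, whose remaining first row and first column entries are 0, and whose lower-right N×N block is I−Â. -/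
open Matrix
set_option linter.unusedSectionVars false

noncomputable section

/-- The matrix `U`: `U(0,0) = 1`, `U(i+1,0) = δ_{i,0} - A(i,0)` (in `0`-based
indexing of `A`, this is `1-A(1,1)` for the first row of `A` and `-A(i,1)` below),
and `U(i,j) = δ_{ij}` for `j ≥ 1`. -/
def Umat {N : ℕ} [NeZero N] (A : Matrix (Fin N) (Fin N) ℤ) : Matrix (Fin (N+1)) (Fin (N+1)) ℤ :=
  Matrix.of fun i j =>
    Fin.cases (Fin.cases 1 (fun i' => (if i' = 0 then 1 else 0) - A i' 0) i)
      (fun j' => if i = j'.succ then 1 else 0) j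

/-- The matrix `V`: first row `(0,1,0,…,0)`, second row `(-1,0,-1,…,-1)`, and
`V(i,j) = δ_{ij}` for `i ≥ 2`. -/
def Vmat (N : ℕ) [NeZero N] : Matrix (Fin (N+1)) (Fin (N+1)) ℤ :=
  Matrix.of fun i j =>
    Fin.cases (if j = 1 then 1 else 0)
      (fun i' =>
        if i' = 0 then (if j = 1 then 0 else -1)
        else (if i'.succ = j then 1 else 0)) i

/-- The block matrix with `(0,0)` entry `1`, vanishing remaining first row and
column, and lower-right block `I - Â`. -/
def Wmat {N : ℕ} [NeZero N] (A : Matrix (Fin N) (Fin N) ℤ) :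
    Matrix (Fin (N+1)) (Fin (N+1)) ℤ :=
  Matrix.of fun i j =>
    Fin.cases (Fin.cases 1 (fun _ => 0) j)
      (fun i' => Fin.cases 0 (fun j' => (1 - Ahat A) i' j') j) i


section Aux

variable {N : ℕ} [NeZero N]

@[simp] lemma aux_zero_ne_succ (j' : Fin N) : ((0 : Fin (N+1)) = j'.succ) = False := by
  simp [(Fin.succ_ne_zero j').symm]

@[simp] lemma aux_succ_eq_one_iff (j' : Fin N) : (j'.succ = (1 : Fin (N+1))) ↔ j' = 0 := by
  rw [← Fin.succ_zero_eq_one', (Fin.succ_injective _).eq_iff]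

@[simp] lemma aux_one_eq_succ_iff (j' : Fin N) : ((1 : Fin (N+1)) = j'.succ) ↔ j' = 0 := by
  rw [eq_comm, aux_succ_eq_one_iff]

variable (A : Matrix (Fin N) (Fin N) ℤ)

@[simp] lemma U00 : Umat A 0 0 = 1 := rfl
@[simp] lemma Us0 (i' : Fin N) : Umat A i'.succ 0 = (if i' = 0 then 1 else 0) - A i' 0 := rfl
@[simp] lemma U0s (j' : Fin N) : Umat A 0 j'.succ = 0 := by
  simp [Umat, (Fin.succ_ne_zero j').symm]
@[simp] lemma Uss (i' j' : Fin N) : Umat A i'.succ j'.succ = if i' = j' then 1 else 0 := by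
  simp [Umat, (Fin.succ_injective N).eq_iff]

/-- Explicit inverse of `Umat`. -/
def Uinv : Matrix (Fin (N+1)) (Fin (N+1)) ℤ :=
  Matrix.of fun i j =>
    Fin.cases (Fin.cases 1 (fun i' => A i' 0 - (if i' = 0 then 1 else 0)) i)
      (fun j' => if i = j'.succ then 1 else 0) j

@[simp] lemma Ui00 : Uinv A 0 0 = 1 := rfl
@[simp] lemma Uis0 (i' : Fin N) : Uinv A i'.succ 0 = A i' 0 - (if i' = 0 then 1 else 0) := rfl
@[simp] lemma Ui0s (j' : Fin N) : Uinv A 0 j'.succ = 0 := by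
  simp [Uinv, (Fin.succ_ne_zero j').symm]
@[simp] lemma Uiss (i' j' : Fin N) : Uinv A i'.succ j'.succ = if i' = j' then 1 else 0 := by
  simp [Uinv, (Fin.succ_injective N).eq_iff]

@[simp] lemma V00 : Vmat N 0 0 = 0 := by simp [Vmat, ← Fin.succ_zero_eq_one']
@[simp] lemma V0s (j' : Fin N) : Vmat N 0 j'.succ = if j' = 0 then 1 else 0 := by
  simp [Vmat, ← Fin.succ_zero_eq_one', (Fin.succ_injective _).eq_iff]
@[simp] lemma Vs0 (i' : Fin N) : Vmat N i'.succ 0 = if i' = 0 then -1 else 0 := by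
  simp [Vmat, Fin.succ_ne_zero, ← Fin.succ_zero_eq_one', (Fin.succ_ne_zero i').symm]
@[simp] lemma Vss (i' j' : Fin N) : Vmat N i'.succ j'.succ =
    if i' = 0 then (if j' = 0 then 0 else -1) else (if i' = j' then 1 else 0) := by
  simp [Vmat, ← Fin.succ_zero_eq_one', (Fin.succ_injective _).eq_iff]

/-- Explicit inverse of `Vmat`. -/
def Vinv (N : ℕ) [NeZero N] : Matrix (Fin (N+1)) (Fin (N+1)) ℤ :=
  Matrix.of fun i j =>
    Fin.cases (Fin.cases 0 (fun _ => -1) j)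
      (fun i' => if i' = 0 then (if j = 0 then 1 else 0) else (if j = i'.succ then 1 else 0)) i

@[simp] lemma Vi00 : Vinv N 0 0 = 0 := rfl
@[simp] lemma Vi0s (j' : Fin N) : Vinv N 0 j'.succ = -1 := rfl
@[simp] lemma Vis0 (i' : Fin N) : Vinv N i'.succ 0 = if i' = 0 then 1 else 0 := by
  simp [Vinv, Fin.succ_ne_zero, (Fin.succ_ne_zero i').symm]
@[simp] lemma Viss (i' j' : Fin N) : Vinv N i'.succ j'.succ =
    if i' = 0 then 0 else (if i' = j' then 1 else 0) := by
  simp [Vinv, Fin.succ_ne_zero, (Fin.succ_injective _).eq_iff, eq_comm]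

@[simp] lemma A10 (j : Fin (N+1)) : A1 A 0 j = 1 := rfl
@[simp] lemma A1s0 (i' : Fin N) : A1 A i'.succ 0 = 0 := by simp [A1]
@[simp] lemma A1ss (i' j' : Fin N) : A1 A i'.succ j'.succ = A i' j' := by simp [A1]

lemma Ahat_apply (i j : Fin N) :
    Ahat A i j = A i j + (if i = 0 then 1 else 0) - A i 0 := by
  have h : (A * R1 N) i j = A i 0 := by
    simp [Matrix.mul_apply, R1, mul_ite, Finset.sum_ite_eq']
  simp only [Ahat, Matrix.sub_apply, Matrix.add_apply, h]
  simp [R1]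

@[simp] lemma W00 : Wmat A 0 0 = 1 := rfl
@[simp] lemma W0s (j' : Fin N) : Wmat A 0 j'.succ = 0 := rfl
@[simp] lemma Ws0 (i' : Fin N) : Wmat A i'.succ 0 = 0 := rfl
@[simp] lemma Wss (i' j' : Fin N) : Wmat A i'.succ j'.succ =
    (if i' = j' then 1 else 0) - (A i' j' + (if i' = 0 then 1 else 0) - A i' 0) := by
  have : Wmat A i'.succ j'.succ = (1 - Ahat A) i' j' := rfl
  rw [this, Matrix.sub_apply, Matrix.one_apply, Ahat_apply]

lemma sum_ite02 {N : ℕ} [NeZero N] (j' : Fin N) (a b : Fin N → ℤ) :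
    (∑ x, if x = 0 then a x else if x = j' then b x else 0)
      = a 0 + if j' = 0 then 0 else b j' := by
  have h : ∀ x : Fin N, (if x = 0 then a x else if x = j' then b x else 0)
      = (if x = 0 then a x else 0) + (if x = j' then (if j' = 0 then 0 else b x) else 0) := by
    intro x
    split_ifs <;> simp_all
  rw [Finset.sum_congr rfl fun x _ => h x, Finset.sum_add_distrib]
  simp [Finset.sum_ite_eq']

lemma sum_ite01 {N : ℕ} [NeZero N] (j' : Fin N) (b : Fin N → ℤ) :
    (∑ x, if x = 0 then 0 else if x = j' then b x else 0)
      = if j' = 0 then 0 else b j' := by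
  simpa using sum_ite02 j' (fun _ => 0) b

lemma ite_ite_same (p : Prop) [Decidable p] (a b c : ℤ) :
    (if p then a else if p then b else c) = if p then a else c := by split <;> rfl

lemma Umat_mul_Uinv : Umat A * Uinv A = 1 := by
  ext i j
  refine Fin.cases ?_ (fun i' => ?_) i <;> refine Fin.cases ?_ (fun j' => ?_) j <;>
    simp [Matrix.mul_apply, Fin.sum_univ_succ, Matrix.one_apply, Fin.succ_ne_zero,
      (Fin.succ_injective N).eq_iff, ite_mul, mul_ite, Finset.sum_ite_eq, Finset.sum_ite_eq',
      sub_mul, mul_sub, -Fin.succ_zero_eq_one, -Fin.succ_zero_eq_one']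

lemma Uinv_mul_Umat : Uinv A * Umat A = 1 := by
  ext i j
  refine Fin.cases ?_ (fun i' => ?_) i <;> refine Fin.cases ?_ (fun j' => ?_) j <;>
    simp [Matrix.mul_apply, Fin.sum_univ_succ, Matrix.one_apply, Fin.succ_ne_zero,
      (Fin.succ_injective N).eq_iff, ite_mul, mul_ite, Finset.sum_ite_eq, Finset.sum_ite_eq',
      sub_mul, mul_sub, -Fin.succ_zero_eq_one, -Fin.succ_zero_eq_one']

lemma Vmat_mul_Vinv : Vmat N * Vinv N = 1 := by
  ext i j
  refine Fin.cases ?_ (fun i' => ?_) i <;> refine Fin.cases ?_ (fun j' => ?_) j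
  · simp [Matrix.mul_apply, Fin.sum_univ_succ, Matrix.one_apply, ite_mul, mul_ite,
      Finset.sum_ite_eq, Finset.sum_ite_eq', -Fin.succ_zero_eq_one, -Fin.succ_zero_eq_one']
  · rcases eq_or_ne j' 0 with hj | hj
    · subst hj
      simp [Matrix.mul_apply, Fin.sum_univ_succ, Matrix.one_apply, ite_mul, mul_ite,
        ite_ite_same, Finset.sum_ite_eq, Finset.sum_ite_eq', Fin.succ_ne_zero,
        -Fin.succ_zero_eq_one, -Fin.succ_zero_eq_one']
    · simp [Matrix.mul_apply, Fin.sum_univ_succ, Matrix.one_apply, ite_mul, mul_ite, hj,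
        ite_ite_same, sum_ite02, sum_ite01, Finset.sum_add_distrib,
        Finset.sum_ite_eq, Finset.sum_ite_eq', Fin.succ_ne_zero,
        -Fin.succ_zero_eq_one, -Fin.succ_zero_eq_one']
  · rcases eq_or_ne i' 0 with hi | hi <;>
      simp [Matrix.mul_apply, Fin.sum_univ_succ, Matrix.one_apply, ite_mul, mul_ite, hi,
        ite_ite_same, Finset.sum_ite_eq, Finset.sum_ite_eq', Fin.succ_ne_zero,
        -Fin.succ_zero_eq_one, -Fin.succ_zero_eq_one']
  · rcases eq_or_ne i' 0 with hi | hi <;> rcases eq_or_ne j' 0 with hj | hj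
    · subst hi; subst hj
      simp [Matrix.mul_apply, Fin.sum_univ_succ, Matrix.one_apply, ite_mul, mul_ite,
        ite_ite_same, Finset.sum_ite_eq, Finset.sum_ite_eq', Fin.succ_ne_zero,
        -Fin.succ_zero_eq_one, -Fin.succ_zero_eq_one']
    · subst hi
      simp [Matrix.mul_apply, Fin.sum_univ_succ, Matrix.one_apply, ite_mul, mul_ite, hj,
        ite_ite_same, sum_ite02, sum_ite01, Finset.sum_add_distrib,
        Finset.sum_ite_eq, Finset.sum_ite_eq', Fin.succ_ne_zero, Ne.symm hj,
        -Fin.succ_zero_eq_one, -Fin.succ_zero_eq_one']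
    · subst hj
      simp [Matrix.mul_apply, Fin.sum_univ_succ, Matrix.one_apply, ite_mul, mul_ite, hi,
        ite_ite_same, Finset.sum_ite_eq, Finset.sum_ite_eq', Fin.succ_ne_zero, Ne.symm hi,
        -Fin.succ_zero_eq_one, -Fin.succ_zero_eq_one']
    · simp [Matrix.mul_apply, Fin.sum_univ_succ, Matrix.one_apply, ite_mul, mul_ite, hi, hj,
        ite_ite_same, sum_ite02, sum_ite01, Finset.sum_add_distrib,
        Finset.sum_ite_eq, Finset.sum_ite_eq', Fin.succ_ne_zero, Ne.symm hj, Ne.symm hi,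
        -Fin.succ_zero_eq_one, -Fin.succ_zero_eq_one']

lemma Vinv_mul_Vmat : Vinv N * Vmat N = 1 := by
  ext i j
  refine Fin.cases ?_ (fun i' => ?_) i <;> refine Fin.cases ?_ (fun j' => ?_) j
  · simp [Matrix.mul_apply, Fin.sum_univ_succ, Matrix.one_apply, ite_mul, mul_ite,
      Finset.sum_ite_eq, Finset.sum_ite_eq', -Fin.succ_zero_eq_one, -Fin.succ_zero_eq_one']
  · rcases eq_or_ne j' 0 with hj | hj
    · subst hj
      simp [Matrix.mul_apply, Fin.sum_univ_succ, Matrix.one_apply, ite_mul, mul_ite,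
        ite_ite_same, Finset.sum_ite_eq, Finset.sum_ite_eq', Fin.succ_ne_zero,
        -Fin.succ_zero_eq_one, -Fin.succ_zero_eq_one']
    · simp [Matrix.mul_apply, Fin.sum_univ_succ, Matrix.one_apply, ite_mul, mul_ite, hj,
        ite_ite_same, sum_ite02, sum_ite01, Finset.sum_add_distrib,
        Finset.sum_ite_eq, Finset.sum_ite_eq', Fin.succ_ne_zero,
        -Fin.succ_zero_eq_one, -Fin.succ_zero_eq_one']
  · rcases eq_or_ne i' 0 with hi | hi <;>
      simp [Matrix.mul_apply, Fin.sum_univ_succ, Matrix.one_apply, ite_mul, mul_ite, hi,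
        ite_ite_same, Finset.sum_ite_eq, Finset.sum_ite_eq', Fin.succ_ne_zero,
        -Fin.succ_zero_eq_one, -Fin.succ_zero_eq_one']
  · rcases eq_or_ne i' 0 with hi | hi <;> rcases eq_or_ne j' 0 with hj | hj
    · subst hi; subst hj
      simp [Matrix.mul_apply, Fin.sum_univ_succ, Matrix.one_apply, ite_mul, mul_ite,
        ite_ite_same, Finset.sum_ite_eq, Finset.sum_ite_eq', Fin.succ_ne_zero,
        -Fin.succ_zero_eq_one, -Fin.succ_zero_eq_one']
    · subst hi
      simp [Matrix.mul_apply, Fin.sum_univ_succ, Matrix.one_apply, ite_mul, mul_ite, hj,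
        ite_ite_same, sum_ite02, sum_ite01, Finset.sum_add_distrib,
        Finset.sum_ite_eq, Finset.sum_ite_eq', Fin.succ_ne_zero, Ne.symm hj,
        -Fin.succ_zero_eq_one, -Fin.succ_zero_eq_one']
    · subst hj
      simp [Matrix.mul_apply, Fin.sum_univ_succ, Matrix.one_apply, ite_mul, mul_ite, hi,
        ite_ite_same, Finset.sum_ite_eq, Finset.sum_ite_eq', Fin.succ_ne_zero, Ne.symm hi,
        -Fin.succ_zero_eq_one, -Fin.succ_zero_eq_one']
    · simp [Matrix.mul_apply, Fin.sum_univ_succ, Matrix.one_apply, ite_mul, mul_ite, hi, hj,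
        ite_ite_same, sum_ite02, sum_ite01, Finset.sum_add_distrib,
        Finset.sum_ite_eq, Finset.sum_ite_eq', Fin.succ_ne_zero, Ne.symm hj, Ne.symm hi,
        -Fin.succ_zero_eq_one, -Fin.succ_zero_eq_one']

lemma key_product : Umat A * (1 - A1 A) * Vmat N = Wmat A := by
  ext i j
  refine Fin.cases ?_ (fun i' => ?_) i <;> refine Fin.cases ?_ (fun j' => ?_) j
  · simp [Matrix.mul_apply, Fin.sum_univ_succ, Matrix.one_apply, ite_mul, mul_ite,
      Finset.sum_ite_eq, Finset.sum_ite_eq', Fin.succ_ne_zero, sub_mul, mul_sub,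
      Finset.sum_sub_distrib, sum_ite02, sum_ite01,
      -Fin.succ_zero_eq_one, -Fin.succ_zero_eq_one']
  · rcases eq_or_ne j' 0 with hj | hj <;>
      simp [Matrix.mul_apply, Fin.sum_univ_succ, Matrix.one_apply, ite_mul, mul_ite, hj,
        ite_ite_same, sum_ite02, sum_ite01, Finset.sum_add_distrib, Fin.succ_ne_zero,
        sub_mul, mul_sub, Finset.sum_sub_distrib,
        Finset.sum_ite_eq, Finset.sum_ite_eq',
        -Fin.succ_zero_eq_one, -Fin.succ_zero_eq_one']
  · rcases eq_or_ne i' 0 with hi | hi <;>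
      simp [Matrix.mul_apply, Fin.sum_univ_succ, Matrix.one_apply, ite_mul, mul_ite, hi,
        ite_ite_same, sum_ite02, sum_ite01, Finset.sum_add_distrib, Fin.succ_ne_zero,
        sub_mul, mul_sub, Finset.sum_sub_distrib,
        Finset.sum_ite_eq, Finset.sum_ite_eq',
        -Fin.succ_zero_eq_one, -Fin.succ_zero_eq_one'] <;>
      ring
  · rcases eq_or_ne i' 0 with hi | hi <;> rcases eq_or_ne j' 0 with hj | hj <;>
      simp [Matrix.mul_apply, Fin.sum_univ_succ, Matrix.one_apply, ite_mul, mul_ite, hi, hj,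
        ite_ite_same, sum_ite02, sum_ite01, Finset.sum_add_distrib, Fin.succ_ne_zero,
        sub_mul, mul_sub, Finset.sum_sub_distrib,
        Finset.sum_ite_eq, Finset.sum_ite_eq',
        -Fin.succ_zero_eq_one, -Fin.succ_zero_eq_one'] <;>
      ring

end Aux

/-- `U` and `V` are invertible over `ℤ` with determinants `±1`, and
`U·(I-A₁)·V` is the block matrix `diag(1, I-Â)`. -/
theorem stmt4 (N : ℕ) [NeZero N] (A : Matrix (Fin N) (Fin N) ℤ)
    (h01 : ZeroOneEntries A) :
    IsUnit (Umat A) ∧ IsUnit (Vmat N) ∧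
    ((Umat A).det = 1 ∨ (Umat A).det = -1) ∧
    ((Vmat N).det = 1 ∨ (Vmat N).det = -1) ∧
    Umat A * (1 - A1 A) * Vmat N = Wmat A := by
  have hU : IsUnit (Umat A) := ⟨⟨Umat A, Uinv A, Umat_mul_Uinv A, Uinv_mul_Umat A⟩, rfl⟩
  have hV : IsUnit (Vmat N) := ⟨⟨Vmat N, Vinv N, Vmat_mul_Vinv, Vinv_mul_Vmat⟩, rfl⟩
  exact ⟨hU, hV, Int.isUnit_iff.mp ((Matrix.isUnit_iff_isUnit_det _).mp hU),
    Int.isUnit_iff.mp ((Matrix.isUnit_iff_isUnit_det _).mp hV), key_product A⟩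

end
end

section
/- Let N ≥ 1 and let A be an N×N matrix with entries in {0,1}, regarded as an integer matrix. For all k, k' ∈ ℤ^N with Σ_{i=1}^N k_i = Σ_{i=1}^N k'_i, one has (I−A)(k − k') ∈ (I−Â)ℤ^N. Consequently the assignment m ↦ [(I−A)k], where k is any vector in ℤ^N with coordinate sum m, is a well-defined group homomorphism ι̂_A : ℤ → ℤ^N/(I−Â)ℤ^N. -/
open Matrix

noncomputable section

/-- For `k, k\' ∈ ℤ^N` with equal coordinate sums, `(I-A)(k-k\') ∈ (I-Â)ℤ^N`;
consequently `m ↦ [(I-A)k]` (for any `k` of coordinate sum `m`) is a well-defined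
group homomorphism `ι̂_A : ℤ → ℤ^N/(I-Â)ℤ^N`. -/
theorem stmt5 (N : ℕ) [NeZero N] (A : Matrix (Fin N) (Fin N) ℤ)
    (h01 : ZeroOneEntries A) :
    (∀ k k' : Fin N → ℤ, (∑ i, k i) = (∑ i, k' i) →
      (1 - A).mulVec (k - k') ∈ colSpan (1 - Ahat A)) ∧
    ∃ f : ℤ →+ MQuot (1 - Ahat A),
      ∀ (m : ℤ) (k : Fin N → ℤ), (∑ i, k i) = m →
        f m = Submodule.Quotient.mk ((1 - A).mulVec k) := by
  have key : ∀ k k' : Fin N → ℤ, (∑ i, k i) = (∑ i, k' i) →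
      (1 - A).mulVec (k - k') ∈ colSpan (1 - Ahat A) := by
    intro k k' hs
    refine ⟨k - k', ?_⟩
    have h0 : sA N (k - k') = 0 := by
      rw [map_sub, sA_apply, sA_apply, hs, sub_self]
    have h1 : (1 - R1 N).mulVec (k - k') = k - k' := by
      rw [Matrix.sub_mulVec, Matrix.one_mulVec, R1_mulVec, h0, zero_smul, sub_zero]
    rw [mulVecLin_apply, one_sub_Ahat, ← Matrix.mulVec_mulVec, h1]
  refine ⟨key, ⟨(iotaHat A).toAddMonoidHom, ?_⟩⟩
  intro m k hk
  simp only [LinearMap.toAddMonoidHom_coe, iotaHat, LinearMap.comp_apply, i1,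
    LinearMap.toSpanSingleton_apply, mulVecLin_apply]
  rw [Submodule.mkQ_apply, Submodule.Quotient.eq, ← Matrix.mulVec_sub]
  refine key _ _ ?_
  rw [← sA_apply, LinearMap.map_smul, sA_e1, smul_eq_mul, mul_one, hk]

end
end

section
/- Let N ≥ 1 and let A = [A(i,j)]_{i,j=1}^N be a matrix with entries in {0,1}. Then there exist a complex Hilbert space H, a unit vector v_0 ∈ H, and bounded linear operators T_1, …, T_N on H such that, with P_0 denoting the orthogonal projection of H onto the one-dimensional subspace spanned by v_0, the following operator relations hold: Σ_{j=1}^N T_j T_j^* + P_0 = 1, and T_i^* T_i = Σ_{j=1}^N A(i,j) T_j T_j^* + P_0 for every i = 1,…,N. -/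
/-!
Take `H = ℓ²(W)`, where `W` is the set of admissible words, and let `T_i` prepend the letter `i`.
Every operator in sight is then a composition operator `f ↦ f ∘ e` for a partial bijection `e` of
`W` (extended by zero off the domain of `e`); such operators are bounded, their adjoint is the
composition operator of `e⁻¹`, and they compose like the partial bijections. Hence `T_i T_i^*`
and `T_i^* T_i` are multiplications by the indicators of `{i w}` and `{w | i w admissible}`, and
`P₀` is the indicator of the empty word. Both relations now say that a set of words is
partitioned: all words by their first letter (or emptiness), and the words `w` with `i w`
admissible by their first letter `j` (which must satisfy `A(i,j) = 1`), or emptiness.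
-/

open Matrix ContinuousLinearMap

noncomputable section

open scoped lp InnerProductSpace ENNReal

namespace PEquiv

variable {α β γ 𝕜 : Type*} [RCLike 𝕜]

def pullback (e : α ≃. β) (f : β → 𝕜) (a : α) : 𝕜 := (e a).elim 0 f

lemma pullback_of_eq_some {e : α ≃. β} {a : α} {b : β} (h : e a = some b) (f : β → 𝕜) :
    e.pullback f a = f b := by
  simp [pullback, h]

lemma pullback_of_eq_none {e : α ≃. β} {a : α} (h : e a = none) (f : β → 𝕜) :
    e.pullback f a = 0 := by
  simp [pullback, h]

lemma pullback_add (e : α ≃. β) (f g : β → 𝕜) :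
    e.pullback (f + g) = e.pullback f + e.pullback g := by
  ext a
  cases hea : e a <;> simp [pullback, hea]

lemma pullback_smul (e : α ≃. β) (c : 𝕜) (f : β → 𝕜) :
    e.pullback (c • f) = c • e.pullback f := by
  ext a
  cases hea : e a <;> simp [pullback, hea]

lemma isSome_of_pullback_ne_zero {e : α ≃. β} {f : β → 𝕜} {a : α}
    (h : e.pullback f a ≠ 0) : (e a).isSome :=
  Option.ne_none_iff_isSome.mp fun hea => h (pullback_of_eq_none hea f)

lemma eq_of_get_eq (e : α ≃. β) {a₁ a₂ : α} {h₁ : (e a₁).isSome} {h₂ : (e a₂).isSome}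
    (h : (e a₁).get h₁ = (e a₂).get h₂) : a₁ = a₂ :=
  e.inj (Option.eq_some_of_isSome h₁) (by rw [h]; exact Option.eq_some_of_isSome h₂)

lemma sum_norm_rpow_pullback_le (e : α ≃. β) (f : ℓ²(β, 𝕜)) (s : Finset α) :
    ∑ a ∈ s, ‖e.pullback f a‖ ^ (2 : ℝ≥0∞).toReal ≤ ‖f‖ ^ (2 : ℝ≥0∞).toReal := by
  have hne {a : α} (ha : ‖e.pullback f a‖ ^ (2 : ℝ≥0∞).toReal ≠ 0) : (e a).isSome :=
    isSome_of_pullback_ne_zero (f := f) fun h => ha (by simp [h])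
  calc ∑ a ∈ s, ‖e.pullback f a‖ ^ (2 : ℝ≥0∞).toReal
      = ∑ b ∈ s.filterMap e (fun _ _ _ => e.inj), ‖f b‖ ^ (2 : ℝ≥0∞).toReal := by
        refine Finset.sum_bij_ne_zero (fun a _ ha => (e a).get (hne ha)) ?_ ?_ ?_ ?_
        · intro a ha _
          exact (Finset.mem_filterMap e).mpr ⟨a, ha, (Option.some_get _).symm⟩
        · exact fun a₁ _ _ a₂ _ _ => e.eq_of_get_eq
        · intro b hb hfb
          obtain ⟨a, ha, hab⟩ := (Finset.mem_filterMap e).mp hb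
          have hfa : ‖e.pullback f a‖ ^ (2 : ℝ≥0∞).toReal ≠ 0 := by
            rwa [pullback_of_eq_some hab]
          exact ⟨a, ha, hfa, by simp [hab]⟩
        · intro a _ ha
          rw [pullback_of_eq_some (Option.eq_some_of_isSome (hne ha))]
    _ ≤ ‖f‖ ^ (2 : ℝ≥0∞).toReal := lp.sum_rpow_le_norm_rpow (by norm_num) f _

def pullbackℓ2 (e : α ≃. β) : ℓ²(β, 𝕜) →L[𝕜] ℓ²(α, 𝕜) :=
  LinearMap.mkContinuous
    { toFun f := ⟨e.pullback f, memℓp_gen' (e.sum_norm_rpow_pullback_le f)⟩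
      map_add' f g := lp.ext (e.pullback_add f g)
      map_smul' c f := lp.ext (e.pullback_smul c f) }
    1 fun f => by
      rw [one_mul]
      exact lp.norm_le_of_forall_sum_le (by norm_num) (norm_nonneg f)
        (e.sum_norm_rpow_pullback_le f)

@[simp] lemma pullbackℓ2_apply (e : α ≃. β) (f : ℓ²(β, 𝕜)) (a : α) :
    e.pullbackℓ2 f a = e.pullback f a := rfl

lemma pullbackℓ2_comp (e : α ≃. β) (e' : β ≃. γ) :
    (e.pullbackℓ2 : ℓ²(β, 𝕜) →L[𝕜] _) ∘L e'.pullbackℓ2 = (e.trans e').pullbackℓ2 := by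
  ext f a
  cases hea : e a <;> simp [pullback, hea, PEquiv.trans]

lemma pullbackℓ2_ofSet_apply (s : Set α) [DecidablePred (· ∈ s)] (f : ℓ²(α, 𝕜)) (a : α) :
    (ofSet s).pullbackℓ2 f a = s.indicator f a := by
  by_cases ha : a ∈ s <;> simp [pullback, ofSet, ha]

lemma adjoint_pullbackℓ2 (e : α ≃. β) :
    adjoint (e.pullbackℓ2 : ℓ²(β, 𝕜) →L[𝕜] _) = e.symm.pullbackℓ2 := by
  refine ((ContinuousLinearMap.eq_adjoint_iff _ _).mpr fun x y => ?_).symm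
  rw [lp.inner_eq_tsum, lp.inner_eq_tsum]
  have hne {a : α} (ha : ⟪x a, e.pullback y a⟫_𝕜 ≠ 0) : (e a).isSome :=
    isSome_of_pullback_ne_zero (f := y) fun h => ha (by simp [h])
  refine tsum_eq_tsum_of_ne_zero_bij (fun a => (e a).get (hne a.2)) ?_ ?_ ?_
  · exact fun a₁ a₂ h => Subtype.ext (e.eq_of_get_eq h)
  · intro b hb
    obtain ⟨a, hba⟩ := Option.isSome_iff_exists.mp
      (isSome_of_pullback_ne_zero (e := e.symm) (f := x) (a := b) fun h => hb (by simp [h]))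
    have hab : e a = some b := e.eq_some_iff.mp hba
    have ha : ⟪x a, e.pullback y a⟫_𝕜 ≠ 0 := by
      rwa [pullback_of_eq_some hab, ← pullback_of_eq_some hba x]
    exact ⟨⟨a, ha⟩, by simp [hab]⟩
  · intro a
    have hab := Option.eq_some_of_isSome (hne a.2)
    simp only [pullbackℓ2_apply, pullback_of_eq_some hab,
      pullback_of_eq_some (e.eq_some_iff.mpr hab)]

end PEquiv

abbrev ChainWord {ι : Type*} (R : ι → ι → Prop) : Type _ := {l : List ι // l.IsChain R}

namespace ChainWord

variable {ι : Type*} (R : ι → ι → Prop)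

def nil : ChainWord R := ⟨[], List.isChain_nil⟩

open Classical in
def consPEquiv (i : ι) : ChainWord R ≃. ChainWord R where
  toFun w := if h : (i :: w.1).IsChain R then some ⟨i :: w.1, h⟩ else none
  invFun w := if w.1.head? = some i then some ⟨w.1.tail, w.2.tail⟩ else none
  inv w w' := by
    obtain ⟨l, hl⟩ := w
    obtain ⟨l', hl'⟩ := w'
    trans l' = i :: l
    · split_ifs with h
      · obtain ⟨t, rfl⟩ := List.head?_eq_some_iff.mp h
        simp [eq_comm]
      · simp only [false_iff]
        rintro rfl
        exact h rfl
    · split_ifs with h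
      · simp [eq_comm]
      · simp only [iff_false]
        rintro rfl
        exact h hl'

lemma isSome_consPEquiv_iff (i : ι) (w : ChainWord R) :
    (consPEquiv R i w).isSome ↔ (i :: w.1).IsChain R := by
  simp [consPEquiv, apply_dite]

lemma isSome_consPEquiv_symm_iff (i : ι) (w : ChainWord R) :
    ((consPEquiv R i).symm w).isSome ↔ w.1.head? = some i := by
  simp [consPEquiv, PEquiv.symm, apply_ite]

variable (𝕜 : Type*) [RCLike 𝕜]

-- `creation R 𝕜 i` maps the basis vector of `w` to that of `i :: w`.
def creation (i : ι) : ℓ²(ChainWord R, 𝕜) →L[𝕜] ℓ²(ChainWord R, 𝕜) :=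
  (consPEquiv R i).symm.pullbackℓ2

lemma adjoint_creation (i : ι) :
    adjoint (creation R 𝕜 i) = (consPEquiv R i).pullbackℓ2 := by
  rw [creation, PEquiv.adjoint_pullbackℓ2, PEquiv.symm_symm]

lemma coe_creation_comp_adjoint_apply (i : ι) (f : ℓ²(ChainWord R, 𝕜)) :
    ⇑((creation R 𝕜 i ∘L adjoint (creation R 𝕜 i)) f) =
      {w : ChainWord R | w.1.head? = some i}.indicator f := by
  ext w
  rw [adjoint_creation, creation, PEquiv.pullbackℓ2_comp, PEquiv.symm_trans_self,
    PEquiv.pullbackℓ2_ofSet_apply]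
  simp [isSome_consPEquiv_symm_iff]

lemma coe_adjoint_comp_creation_apply (i : ι) (f : ℓ²(ChainWord R, 𝕜)) :
    ⇑((adjoint (creation R 𝕜 i) ∘L creation R 𝕜 i) f) =
      {w : ChainWord R | (i :: w.1).IsChain R}.indicator f := by
  ext w
  rw [adjoint_creation, creation, PEquiv.pullbackℓ2_comp, PEquiv.self_trans_symm,
    PEquiv.pullbackℓ2_ofSet_apply]
  simp [isSome_consPEquiv_iff]

open Classical in
def vacuum : ℓ²(ChainWord R, 𝕜) := lp.single 2 (nil R) 1

lemma norm_vacuum : ‖vacuum R 𝕜‖ = 1 := by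
  classical
  rw [vacuum, lp.norm_single (by norm_num), norm_one]

lemma coe_starProjection_vacuum_apply (f : ℓ²(ChainWord R, 𝕜)) :
    ⇑((𝕜 ∙ vacuum R 𝕜).starProjection f) = ({nil R} : Set (ChainWord R)).indicator f := by
  classical
  ext w
  rw [Submodule.starProjection_unit_singleton 𝕜 (norm_vacuum R 𝕜), vacuum, lp.inner_single_left]
  by_cases hw : w = nil R <;> simp [hw]

theorem sum_creation_comp_adjoint_add_starProjection [Fintype ι] :
    ∑ j, creation R 𝕜 j ∘L adjoint (creation R 𝕜 j) + (𝕜 ∙ vacuum R 𝕜).starProjection = 1 := by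
  classical
  refine ContinuousLinearMap.ext fun f => lp.ext <| funext fun w => ?_
  rw [_root_.add_apply, lp.coeFn_add, Pi.add_apply, _root_.sum_apply, lp.coeFn_sum,
    Finset.sum_apply, coe_starProjection_vacuum_apply]
  simp_rw [coe_creation_comp_adjoint_apply]
  obtain ⟨_ | ⟨k, t⟩, hw⟩ := w
  · simp [nil]
  · simp [nil, Set.indicator_apply]

theorem adjoint_comp_creation [Fintype ι] [DecidableRel R] (i : ι) :
    adjoint (creation R 𝕜 i) ∘L creation R 𝕜 i =
      ∑ j with R i j, creation R 𝕜 j ∘L adjoint (creation R 𝕜 j) +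
        (𝕜 ∙ vacuum R 𝕜).starProjection := by
  classical
  refine ContinuousLinearMap.ext fun f => lp.ext <| funext fun w => ?_
  rw [_root_.add_apply, lp.coeFn_add, Pi.add_apply, _root_.sum_apply, lp.coeFn_sum,
    Finset.sum_apply, coe_starProjection_vacuum_apply, coe_adjoint_comp_creation_apply]
  simp_rw [coe_creation_comp_adjoint_apply]
  obtain ⟨_ | ⟨k, t⟩, hw⟩ := w
  · simp [nil]
  · simp [nil, Set.indicator_apply, hw]

end ChainWord

theorem stmt8_general (N : ℕ) (A : Matrix (Fin N) (Fin N) ℤ)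
    (h01 : ZeroOneEntries A) :
    ∃ (H : Type) (_ : NormedAddCommGroup H) (_ : InnerProductSpace ℂ H)
      (_ : CompleteSpace H) (v₀ : H) (T : Fin N → H →L[ℂ] H) (P₀ : H →L[ℂ] H),
      ‖v₀‖ = 1 ∧
      IsIdempotentElem P₀ ∧ IsSelfAdjoint P₀ ∧
      LinearMap.range (P₀ : H →ₗ[ℂ] H) = Submodule.span ℂ {v₀} ∧
      (∑ j, T j ∘L ContinuousLinearMap.adjoint (T j)) + P₀ = 1 ∧
      (∀ i, ContinuousLinearMap.adjoint (T i) ∘L T i =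
        (∑ j, (A i j : ℂ) • (T j ∘L ContinuousLinearMap.adjoint (T j))) + P₀) := by
  let R : Fin N → Fin N → Prop := fun i j => A i j = 1
  have : DecidableRel R := fun i j => inferInstanceAs (Decidable (A i j = 1))
  refine ⟨ℓ²(ChainWord R, ℂ), inferInstance, inferInstance, inferInstance,
    ChainWord.vacuum R ℂ, ChainWord.creation R ℂ, (ℂ ∙ ChainWord.vacuum R ℂ).starProjection,
    ChainWord.norm_vacuum R ℂ, Submodule.isIdempotentElem_starProjection _,
    isSelfAdjoint_starProjection _, Submodule.range_starProjection _,
    ChainWord.sum_creation_comp_adjoint_add_starProjection R ℂ, fun i => ?_⟩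
  have hweight (j : Fin N) (X : ℓ²(ChainWord R, ℂ) →L[ℂ] ℓ²(ChainWord R, ℂ)) :
      (A i j : ℂ) • X = if R i j then X else 0 := by
    rcases h01 i j with h | h <;> simp [R, h]
  simp_rw [ChainWord.adjoint_comp_creation R ℂ i, Finset.sum_filter, hweight]

/-- There exist a complex Hilbert space `H`, a unit vector `v₀ ∈ H` and bounded
operators `T₁, …, T_N` on `H` such that, with `P₀` the orthogonal projection onto
`ℂ·v₀` (i.e. the self-adjoint idempotent with range `span{v₀}`), the Toeplitz
relations `∑_j T_j T_j^* + P₀ = 1` and `T_i^* T_i = ∑_j A(i,j) T_j T_j^* + P₀`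
hold. -/
theorem stmt8 (N : ℕ) [NeZero N] (A : Matrix (Fin N) (Fin N) ℤ)
    (h01 : ZeroOneEntries A) :
    ∃ (H : Type) (_ : NormedAddCommGroup H) (_ : InnerProductSpace ℂ H)
      (_ : CompleteSpace H) (v₀ : H) (T : Fin N → H →L[ℂ] H) (P₀ : H →L[ℂ] H),
      ‖v₀‖ = 1 ∧
      IsIdempotentElem P₀ ∧ IsSelfAdjoint P₀ ∧
      LinearMap.range (P₀ : H →ₗ[ℂ] H) = Submodule.span ℂ {v₀} ∧
      (∑ j, T j ∘L ContinuousLinearMap.adjoint (T j)) + P₀ = 1 ∧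
      (∀ i, ContinuousLinearMap.adjoint (T i) ∘L T i =
        (∑ j, (A i j : ℂ) • (T j ∘L ContinuousLinearMap.adjoint (T j))) + P₀) :=
  stmt8_general N A h01

end
end

section
/- Let C = [[1,1,1],[1,1,1],[1,0,1]] (a 3×3 integer matrix). Then there exists a group isomorphism φ : ℤ^4/(I−C_1)ℤ^4 → ℤ such that φ([(1,0,0,0)]) = 1 and φ([(1,1,1,1)]) = −1. -/
open Matrix

noncomputable section

def fAux : (Fin 4 → ℤ) →ₗ[ℤ] ℤ :=
  (LinearMap.proj 0 : (Fin 4 → ℤ) →ₗ[ℤ] ℤ) - LinearMap.proj 1 - LinearMap.proj 3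

lemma fAux_apply (x : Fin 4 → ℤ) : fAux x = x 0 - x 1 - x 3 := rfl

lemma matrix_eq :
    (1 - A1 !![1, 1, 1; 1, 1, 1; 1, 0, (1 : ℤ)]) =
      !![0, -1, -1, -1; 0, 0, -1, -1; 0, -1, 0, -1; 0, -1, 0, 0] := by
  decide

lemma span_eq_ker :
    colSpan (1 - A1 !![1, 1, 1; 1, 1, 1; 1, 0, (1 : ℤ)]) = LinearMap.ker fAux := by
  rw [matrix_eq]
  apply le_antisymm
  · rintro _ ⟨x, rfl⟩
    simp [fAux_apply, Matrix.mulVecLin_apply, Matrix.mulVec, dotProduct,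
      Fin.sum_univ_four]
  · intro x hx
    rw [LinearMap.mem_ker, fAux_apply, sub_sub, sub_eq_zero] at hx
    refine ⟨![0, -x 3, x 2 - x 1 - x 3, x 3 - x 2], ?_⟩
    funext i
    fin_cases i <;>
      · simp [Matrix.mulVecLin_apply, Matrix.mulVec, dotProduct, Fin.sum_univ_four, hx]
        try ring

lemma fAux_surj : Function.Surjective fAux := fun m => ⟨![m, 0, 0, 0], by
  simp [fAux_apply]⟩

/-- For `C = [[1,1,1],[1,1,1],[1,0,1]]`, the group `ℤ⁴/(I-C₁)ℤ⁴` is isomorphic to `ℤ`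
via an isomorphism sending `[(1,0,0,0)]` to `1` and `[(1,1,1,1)]` to `-1`. -/
theorem stmt10 :
    ∃ φ : MQuot (1 - A1 !![1, 1, 1; 1, 1, 1; 1, 0, (1 : ℤ)]) ≃+ ℤ,
      φ (Submodule.Quotient.mk ![1, 0, 0, 0]) = 1 ∧
      φ (Submodule.Quotient.mk ![1, 1, 1, 1]) = -1 := by
  refine ⟨((Submodule.quotEquivOfEq _ _ span_eq_ker).trans
    (fAux.quotKerEquivOfSurjective fAux_surj)).toAddEquiv, ?_, ?_⟩ <;>
  · show (fAux.quotKerEquivOfSurjective fAux_surj)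
      ((Submodule.quotEquivOfEq _ _ span_eq_ker) (Submodule.Quotient.mk _)) = _
    rw [Submodule.quotEquivOfEq_mk, LinearMap.quotKerEquivOfSurjective,
      LinearEquiv.trans_apply, LinearEquiv.ofTop_apply,
      LinearMap.quotKerEquivRange_apply_mk, fAux_apply]
    simp

end
end

section
/- Let B_- = [[1,1,0,0],[1,1,1,0],[0,1,1,1],[0,0,1,1]] and C = [[1,1,1],[1,1,1],[1,0,1]]. Then there exists a group isomorphism ψ : ℤ^5/(I−(B_-)_1)ℤ^5 → ℤ^4/(I−C_1)ℤ^4 such that ψ([(1,0,0,0,0)]) = [(1,0,0,0)] and ψ([(1,1,1,1,1)]) = [(1,1,1,1)]. -/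
open Matrix

noncomputable section

/-! ### Auxiliary material for `stmt12` -/

/-- The concrete matrix `B₋`. -/
def BBmat : Matrix (Fin 4) (Fin 4) ℤ := !![1, 1, 0, 0; 1, 1, 1, 0; 0, 1, 1, 1; 0, 0, 1, (1 : ℤ)]

/-- The concrete matrix `C`. -/
def CCmat : Matrix (Fin 3) (Fin 3) ℤ := !![1, 1, 1; 1, 1, 1; 1, 0, (1 : ℤ)]

lemma MB_eq : (1 : Matrix (Fin 5) (Fin 5) ℤ) - A1 BBmat
    = !![0,-1,-1,-1,-1; 0,0,-1,0,0; 0,-1,0,-1,0; 0,0,-1,0,-1; 0,0,0,-1,0] := by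
  decide

lemma MC_eq : (1 : Matrix (Fin 4) (Fin 4) ℤ) - A1 CCmat
    = !![0,-1,-1,-1; 0,0,-1,-1; 0,-1,0,-1; 0,-1,0,0] := by
  decide

/-- The functional `x ↦ x₀ - x₂ - x₃` on `ℤ⁵`. -/
def fB : (Fin 5 → ℤ) →ₗ[ℤ] ℤ :=
  (LinearMap.proj 0 : (Fin 5 → ℤ) →ₗ[ℤ] ℤ) - LinearMap.proj 2 - LinearMap.proj 3

/-- The functional `x ↦ x₀ - x₁ - x₃` on `ℤ⁴`. -/
def gC : (Fin 4 → ℤ) →ₗ[ℤ] ℤ :=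
  (LinearMap.proj 0 : (Fin 4 → ℤ) →ₗ[ℤ] ℤ) - LinearMap.proj 1 - LinearMap.proj 3

lemma keyB (x : Fin 5 → ℤ) :
    x - fB x • e1 5 = (1 - A1 BBmat).mulVec ![0, x 4 - x 2, -x 1, -x 4, x 1 - x 3] := by
  rw [MB_eq]
  funext i
  fin_cases i <;>
    simp [fB, e1, Matrix.mulVec, dotProduct, Fin.sum_univ_five, Pi.single_apply] <;> ring

lemma keyC (x : Fin 4 → ℤ) :
    x - gC x • e1 4 = (1 - A1 CCmat).mulVec ![0, -x 3, -(x 1 - x 2 + x 3), x 3 - x 2] := by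
  rw [MC_eq]
  funext i
  fin_cases i <;>
    simp [gC, e1, Matrix.mulVec, dotProduct, Fin.sum_univ_four, Pi.single_apply] <;> ring

lemma fB_vanish : ∀ y ∈ colSpan (1 - A1 BBmat), fB y = 0 := by
  rintro _ ⟨y, rfl⟩
  rw [mulVecLin_apply, MB_eq]
  simp [fB, Matrix.mulVec, dotProduct, Fin.sum_univ_five]
  ring

lemma gC_vanish : ∀ y ∈ colSpan (1 - A1 CCmat), gC y = 0 := by
  rintro _ ⟨y, rfl⟩
  rw [mulVecLin_apply, MC_eq]
  simp [gC, Matrix.mulVec, dotProduct, Fin.sum_univ_four]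

/-- The induced map `ℤ⁵/(I-(B₋)₁)ℤ⁵ → ℤ`. -/
def phiB : MQuot (1 - A1 BBmat) →ₗ[ℤ] ℤ :=
  Submodule.liftQ _ fB (fun y hy => fB_vanish y hy)

/-- The induced map `ℤ⁴/(I-C₁)ℤ⁴ → ℤ`. -/
def phiC : MQuot (1 - A1 CCmat) →ₗ[ℤ] ℤ :=
  Submodule.liftQ _ gC (fun y hy => gC_vanish y hy)

lemma memB (x : Fin 5 → ℤ) : x - fB x • e1 5 ∈ colSpan (1 - A1 BBmat) :=
  ⟨![0, x 4 - x 2, -x 1, -x 4, x 1 - x 3], (keyB x).symm⟩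

lemma memC (x : Fin 4 → ℤ) : x - gC x • e1 4 ∈ colSpan (1 - A1 CCmat) :=
  ⟨![0, -x 3, -(x 1 - x 2 + x 3), x 3 - x 2], (keyC x).symm⟩

/-- `ℤ⁵/(I-(B₋)₁)ℤ⁵ ≅ ℤ`. -/
def equivB : MQuot (1 - A1 BBmat) ≃+ ℤ where
  toFun := phiB
  invFun m := Submodule.Quotient.mk (m • e1 5)
  left_inv := by
    intro q
    obtain ⟨x, rfl⟩ := Submodule.Quotient.mk_surjective _ q
    have h : phiB (Submodule.Quotient.mk x) = fB x := rfl
    rw [h, Submodule.Quotient.eq]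
    simpa using Submodule.neg_mem _ (memB x)
  right_inv m := by
    have h : phiB (Submodule.Quotient.mk (m • e1 5)) = fB (m • e1 5) := rfl
    rw [h, _root_.map_smul]
    simp [fB, e1, Pi.single_apply]
  map_add' := map_add phiB

/-- `ℤ⁴/(I-C₁)ℤ⁴ ≅ ℤ`. -/
def equivC : MQuot (1 - A1 CCmat) ≃+ ℤ where
  toFun := phiC
  invFun m := Submodule.Quotient.mk (m • e1 4)
  left_inv := by
    intro q
    obtain ⟨x, rfl⟩ := Submodule.Quotient.mk_surjective _ q
    have h : phiC (Submodule.Quotient.mk x) = gC x := rfl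
    rw [h, Submodule.Quotient.eq]
    simpa using Submodule.neg_mem _ (memC x)
  right_inv m := by
    have h : phiC (Submodule.Quotient.mk (m • e1 4)) = gC (m • e1 4) := rfl
    rw [h, _root_.map_smul]
    simp [gC, e1, Pi.single_apply]
  map_add' := map_add phiC

/-- For `B₋` and `C` as in the paper, there is a group isomorphism
`ℤ⁵/(I-(B₋)₁)ℤ⁵ → ℤ⁴/(I-C₁)ℤ⁴` sending `[(1,0,0,0,0)]` to `[(1,0,0,0)]` and
`[(1,1,1,1,1)]` to `[(1,1,1,1)]`. -/
theorem stmt12 :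
    ∃ ψ : MQuot (1 - A1 !![1, 1, 0, 0; 1, 1, 1, 0; 0, 1, 1, 1; 0, 0, 1, (1 : ℤ)]) ≃+
          MQuot (1 - A1 !![1, 1, 1; 1, 1, 1; 1, 0, (1 : ℤ)]),
      ψ (Submodule.Quotient.mk ![1, 0, 0, 0, 0]) = Submodule.Quotient.mk ![1, 0, 0, 0] ∧
      ψ (Submodule.Quotient.mk ![1, 1, 1, 1, 1]) = Submodule.Quotient.mk ![1, 1, 1, 1] := by
  refine ⟨(equivB.trans equivC.symm : MQuot (1 - A1 BBmat) ≃+ MQuot (1 - A1 CCmat)), ?_, ?_⟩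
  · show equivC.symm (equivB (Submodule.Quotient.mk ![1, 0, 0, 0, 0]))
      = Submodule.Quotient.mk ![1, 0, 0, 0]
    rw [AddEquiv.symm_apply_eq]
    have h1 : equivB (Submodule.Quotient.mk ![1, 0, 0, 0, 0]) = fB ![1, 0, 0, 0, 0] := rfl
    have h2 : equivC (Submodule.Quotient.mk ![1, 0, 0, 0]) = gC ![1, 0, 0, 0] := rfl
    rw [h1, h2]
    simp [fB, gC]
  · show equivC.symm (equivB (Submodule.Quotient.mk ![1, 1, 1, 1, 1]))
      = Submodule.Quotient.mk ![1, 1, 1, 1]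
    rw [AddEquiv.symm_apply_eq]
    have h1 : equivB (Submodule.Quotient.mk ![1, 1, 1, 1, 1]) = fB ![1, 1, 1, 1, 1] := rfl
    have h2 : equivC (Submodule.Quotient.mk ![1, 1, 1, 1]) = gC ![1, 1, 1, 1] := rfl
    rw [h1, h2]
    simp [fB, gC]

end
end

section
/- Let F = [[1,1],[1,0]] and C = [[1,1,1],[1,1,1],[1,0,1]]. Then there is no group isomorphism φ : ℤ^3/(I−F_1)ℤ^3 → ℤ^4/(I−C_1)ℤ^4 such that φ([(1,0,0)]) = [(1,0,0,0)] and φ([(1,1,1)]) = [(1,1,1,1)]. -/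
open Matrix

noncomputable section

/-!
Since `(3,1,1) = (I - F₁)(0,-2,-1)`, the unit class `[(1,1,1)]` is `-2 [(1,0,0)]` in the source.
In the target, `(1,-1,0,-1)` is a left null vector of `I - C₁`, so `x ↦ x₀ - x₁ - x₃` descends to
the quotient; it takes the value `1` on `2 (1,0,0,0) + (1,1,1,1)`, so the same relation fails there.
-/

lemma mk_mulVec_eq_zero {N : ℕ} (M : Matrix (Fin N) (Fin N) ℤ) (x : Fin N → ℤ) :
    (Submodule.Quotient.mk (M *ᵥ x) : MQuot M) = 0 :=
  (Submodule.Quotient.mk_eq_zero _).2 ⟨x, rfl⟩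

lemma mk_ne_zero_of_vecMul_eq_zero {N : ℕ} {M : Matrix (Fin N) (Fin N) ℤ} {w v : Fin N → ℤ}
    (hw : w ᵥ* M = 0) (hv : w ⬝ᵥ v ≠ 0) : (Submodule.Quotient.mk v : MQuot M) ≠ 0 := by
  rw [Ne, Submodule.Quotient.mk_eq_zero]
  rintro ⟨x, rfl⟩
  rw [mulVecLin_apply, dotProduct_mulVec, hw, zero_dotProduct] at hv
  exact hv rfl

lemma one_sub_A1_F : 1 - A1 !![1, 1; 1, (0 : ℤ)] = !![0, -1, -1; 0, 0, -1; 0, -1, 1] := by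
  ext i j; fin_cases i <;> fin_cases j <;> rfl

lemma one_sub_A1_C :
    1 - A1 !![1, 1, 1; 1, 1, 1; 1, 0, (1 : ℤ)] =
      !![0, -1, -1, -1; 0, 0, -1, -1; 0, -1, 0, -1; 0, -1, 0, 0] := by
  ext i j; fin_cases i <;> fin_cases j <;> rfl

lemma mk_three_one_one_eq_zero :
    (Submodule.Quotient.mk ![3, 1, 1] : MQuot (1 - A1 !![1, 1; 1, (0 : ℤ)])) = 0 := by
  have h : ![3, 1, 1] = (1 - A1 !![1, 1; 1, (0 : ℤ)]) *ᵥ ![0, -2, -1] := by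
    rw [one_sub_A1_F]; decide
  rw [h]; exact mk_mulVec_eq_zero _ _

lemma mk_three_one_one_one_ne_zero :
    (Submodule.Quotient.mk ![3, 1, 1, 1] : MQuot (1 - A1 !![1, 1, 1; 1, 1, 1; 1, 0, (1 : ℤ)]))
      ≠ 0 :=
  mk_ne_zero_of_vecMul_eq_zero (w := ![1, -1, 0, -1]) (by rw [one_sub_A1_C]; decide) (by decide)

/-- For `F = [[1,1],[1,0]]` and `C = [[1,1,1],[1,1,1],[1,0,1]]`, there is no group
isomorphism `ℤ³/(I-F₁)ℤ³ → ℤ⁴/(I-C₁)ℤ⁴` sending `[(1,0,0)]` to `[(1,0,0,0)]` and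
`[(1,1,1)]` to `[(1,1,1,1)]`. -/
theorem stmt13 :
    ¬ ∃ φ : MQuot (1 - A1 !![1, 1; 1, (0 : ℤ)]) ≃+
            MQuot (1 - A1 !![1, 1, 1; 1, 1, 1; 1, 0, (1 : ℤ)]),
      φ (Submodule.Quotient.mk ![1, 0, 0]) = Submodule.Quotient.mk ![1, 0, 0, 0] ∧
      φ (Submodule.Quotient.mk ![1, 1, 1]) = Submodule.Quotient.mk ![1, 1, 1, 1] := by
  rintro ⟨φ, he, hu⟩
  apply mk_three_one_one_one_ne_zero
  calc Submodule.Quotient.mk ![3, 1, 1, 1]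
      = (2 : ℤ) • Submodule.Quotient.mk ![1, 0, 0, 0] + Submodule.Quotient.mk ![1, 1, 1, 1] := by
        rw [← Submodule.Quotient.mk_smul, ← Submodule.Quotient.mk_add]; congr 1; decide
    _ = φ ((2 : ℤ) • Submodule.Quotient.mk ![1, 0, 0] + Submodule.Quotient.mk ![1, 1, 1]) := by
        rw [map_add, map_zsmul, he, hu]
    _ = φ (Submodule.Quotient.mk ![3, 1, 1]) := by
        rw [← Submodule.Quotient.mk_smul, ← Submodule.Quotient.mk_add]; congr 2; decide
    _ = 0 := by rw [mk_three_one_one_eq_zero, map_zero]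

end
end

section
/- Let A = [[1,1,1],[1,1,1],[1,0,0]] (a 3×3 integer matrix). Then there exists a group isomorphism φ : ℤ^4/(I−A_1)ℤ^4 → ℤ such that φ([(1,0,0,0)]) = 2 and φ([(1,1,1,1)]) = −2. -/
open Matrix

noncomputable section

/-!
The row `f = (2, -2, -1, -1)` annihilates the columns of `I - A₁`, and `I - A₁` maps onto the
hyperplane `f ⬝ᵥ x = 0`, on which an explicit integer matrix `B` inverts it. Hence `x ↦ f ⬝ᵥ x`
identifies the cokernel `ℤ⁴/(I - A₁)ℤ⁴` with `ℤ`, and it sends `(1,0,0,0)` to `2` and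
`(1,1,1,1)` to `-2`.
-/

namespace Matrix

variable {R ι : Type*} [CommRing R] [Fintype ι] [DecidableEq ι]

theorem range_mulVecLin_eq_ker_dotProduct {M B : Matrix ι ι R} {f v : ι → R}
    (hfM : f ᵥ* M = 0) (hMB : M * B = 1 - vecMulVec v f) :
    LinearMap.range M.mulVecLin = LinearMap.ker (dotProductEquiv R ι f) := by
  apply le_antisymm
  · rintro _ ⟨x, rfl⟩
    simp [dotProduct_mulVec, hfM]
  · intro x hx
    replace hx : f ⬝ᵥ x = 0 := hx
    refine ⟨B *ᵥ x, ?_⟩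
    simp [mulVec_mulVec, hMB, sub_mulVec, vecMulVec_mulVec, hx]

def quotRangeMulVecLinEquiv {M B : Matrix ι ι R} {f v : ι → R}
    (hfM : f ᵥ* M = 0) (hMB : M * B = 1 - vecMulVec v f) (hfv : f ⬝ᵥ v = 1) :
    ((ι → R) ⧸ LinearMap.range M.mulVecLin) ≃ₗ[R] R :=
  (Submodule.quotEquivOfEq _ _ (range_mulVecLin_eq_ker_dotProduct hfM hMB)).trans
    ((dotProductEquiv R ι f).quotKerEquivOfSurjective fun r => ⟨r • v, by simp [hfv]⟩)

theorem quotRangeMulVecLinEquiv_mk {M B : Matrix ι ι R} {f v : ι → R}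
    (hfM : f ᵥ* M = 0) (hMB : M * B = 1 - vecMulVec v f) (hfv : f ⬝ᵥ v = 1) (x : ι → R) :
    quotRangeMulVecLinEquiv hfM hMB hfv (Submodule.Quotient.mk x) = f ⬝ᵥ x :=
  rfl

end Matrix

theorem one_sub_A1_eq :
    1 - A1 !![1, 1, 1; 1, 1, 1; 1, 0, (0 : ℤ)] =
      !![0, -1, -1, -1; 0, 0, -1, -1; 0, -1, 0, -1; 0, -1, 0, 1] := by
  ext i j
  fin_cases i <;> fin_cases j <;> decide

/-- For `A = [[1,1,1],[1,1,1],[1,0,0]]`, the group `ℤ⁴/(I-A₁)ℤ⁴` is isomorphic to `ℤ`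
via an isomorphism sending `[(1,0,0,0)]` to `2` and `[(1,1,1,1)]` to `-2`. -/
theorem stmt14 :
    ∃ φ : MQuot (1 - A1 !![1, 1, 1; 1, 1, 1; 1, 0, (0 : ℤ)]) ≃+ ℤ,
      φ (Submodule.Quotient.mk ![1, 0, 0, 0]) = 2 ∧
      φ (Submodule.Quotient.mk ![1, 1, 1, 1]) = -2 := by
  rw [one_sub_A1_eq]
  have hfM : ![2, -2, -1, -1] ᵥ*
      !![0, -1, -1, -1; 0, 0, -1, -1; 0, -1, 0, -1; 0, -1, 0, 1] = 0 := by
    decide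
  have hMB : !![0, -1, -1, -1; 0, 0, -1, -1; 0, -1, 0, -1; 0, -1, 0, 1] *
      !![0, 0, 0, 0; -1, 1, 0, 0; 1, -2, 0, -1; -1, 1, 0, 1] =
      1 - vecMulVec ![0, 0, -1, 0] ![2, -2, -1, (-1 : ℤ)] := by
    decide
  have hfv : ![2, -2, -1, -1] ⬝ᵥ ![0, 0, -1, (0 : ℤ)] = 1 := by decide
  refine ⟨(Matrix.quotRangeMulVecLinEquiv hfM hMB hfv).toAddEquiv, ?_, ?_⟩ <;>
    exact (Matrix.quotRangeMulVecLinEquiv_mk hfM hMB hfv _).trans (by decide)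

end
end

section
/- Let B = [[1,1,1],[1,1,0],[1,1,0]] (a 3×3 integer matrix, the transpose of [[1,1,1],[1,1,1],[1,0,0]]). Then there exists a group isomorphism φ : ℤ^4/(I−B_1)ℤ^4 → ℤ ⊕ ℤ/2ℤ such that φ([(1,0,0,0)]) = (1, 0̄) and φ([(1,1,1,1)]) = (−1, 1̄). -/
open Matrix

noncomputable section

/-- Auxiliary map `x ↦ (x₀-x₁-x₂, x₁+x₂+x₃ mod 2)` for the computation in `stmt15`. -/
def gmap15 : (Fin 4 → ℤ) →ₗ[ℤ] ℤ × ZMod 2 where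
  toFun x := (x 0 - x 1 - x 2, ((x 1 + x 2 + x 3 : ℤ) : ZMod 2))
  map_add' a b := by
    refine Prod.ext ?_ ?_ <;> simp <;> push_cast <;> ring
  map_smul' c a := by
    refine Prod.ext ?_ ?_ <;> simp [zsmul_eq_mul] <;> push_cast <;> ring

lemma matval15 : (1 - A1 !![1, 1, 1; 1, 1, 0; 1, 1, (0:ℤ)])
    = !![0,-1,-1,-1; 0,0,-1,-1; 0,-1,0,0; 0,-1,-1,1] := by decide

lemma mulVec15 (x : Fin 4 → ℤ) :
    (1 - A1 !![1, 1, 1; 1, 1, 0; 1, 1, (0:ℤ)]).mulVec x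
      = ![-x 1 - x 2 - x 3, -x 2 - x 3, -x 1, -x 1 - x 2 + x 3] := by
  rw [matval15]
  funext i
  fin_cases i <;>
    simp [Matrix.mulVec, dotProduct, Fin.sum_univ_four] <;> ring

lemma span_le15 :
    colSpan (1 - A1 !![1, 1, 1; 1, 1, 0; 1, 1, (0:ℤ)]) ≤ LinearMap.ker gmap15 := by
  rintro _ ⟨x, rfl⟩
  simp only [LinearMap.mem_ker, mulVecLin_apply, mulVec15]
  refine Prod.ext ?_ ?_
  · show (-x 1 - x 2 - x 3) - (-x 2 - x 3) - (-x 1) = 0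
    ring
  · show (((-x 2 - x 3) + (-x 1) + (-x 1 - x 2 + x 3) : ℤ) : ZMod 2) = 0
    have : ((-x 2 - x 3) + (-x 1) + (-x 1 - x 2 + x 3) : ℤ) = 2 * (-x 1 - x 2) := by ring
    rw [this]
    push_cast
    have h2 : (2 : ZMod 2) = 0 := rfl
    rw [h2, zero_mul]

lemma ker_le15 :
    LinearMap.ker gmap15 ≤ colSpan (1 - A1 !![1, 1, 1; 1, 1, 0; 1, 1, (0:ℤ)]) := by
  intro x hx
  simp only [LinearMap.mem_ker, gmap15, LinearMap.coe_mk, AddHom.coe_mk, Prod.mk_eq_zero] at hx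
  obtain ⟨h1, h2⟩ := hx
  obtain ⟨k, hk⟩ := (ZMod.intCast_zmod_eq_zero_iff_dvd _ 2).mp h2
  refine ⟨![0, -x 2, x 2 - k, k - x 1 - x 2], ?_⟩
  rw [mulVecLin_apply, mulVec15]
  funext i
  fin_cases i <;> simp <;> omega

lemma gmap15_surj : Function.Surjective gmap15 := by
  rintro ⟨a, b⟩
  refine ⟨![a, 0, 0, (b.val : ℤ)], ?_⟩
  have hb : ∀ c : ZMod 2, ((c.val : ℤ) : ZMod 2) = c := by decide
  refine Prod.ext ?_ ?_
  · show a - 0 - 0 = a; ring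
  · show (((0 : ℤ) + 0 + (b.val : ℤ) : ℤ) : ZMod 2) = b
    rw [zero_add, zero_add, hb]

/-- For `B = [[1,1,1],[1,1,0],[1,1,0]]`, the group `ℤ⁴/(I-B₁)ℤ⁴` is isomorphic to
`ℤ ⊕ ℤ/2ℤ` via an isomorphism sending `[(1,0,0,0)]` to `(1, 0̄)` and `[(1,1,1,1)]`
to `(-1, 1̄)`. -/
theorem stmt15 :
    ∃ φ : MQuot (1 - A1 !![1, 1, 1; 1, 1, 0; 1, 1, (0 : ℤ)]) ≃+ ℤ × ZMod 2,
      φ (Submodule.Quotient.mk ![1, 0, 0, 0]) = (1, 0) ∧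
      φ (Submodule.Quotient.mk ![1, 1, 1, 1]) = (-1, 1) := by
  set p := colSpan (1 - A1 !![1, 1, 1; 1, 1, 0; 1, 1, (0 : ℤ)]) with hp
  let φ₀ : MQuot (1 - A1 !![1, 1, 1; 1, 1, 0; 1, 1, (0 : ℤ)]) →ₗ[ℤ] ℤ × ZMod 2 :=
    Submodule.liftQ p gmap15 span_le15
  have hinj : Function.Injective φ₀ := by
    rw [← LinearMap.ker_eq_bot, Submodule.ker_liftQ_eq_bot _ _ _ ker_le15]
  have hsurj : Function.Surjective φ₀ := by
    intro y
    obtain ⟨x, hx⟩ := gmap15_surj y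
    exact ⟨Submodule.Quotient.mk x, hx⟩
  let e := LinearEquiv.ofBijective φ₀ ⟨hinj, hsurj⟩
  refine ⟨e.toAddEquiv, ?_, ?_⟩
  · show φ₀ (Submodule.Quotient.mk ![1, 0, 0, 0]) = (1, 0)
    show gmap15 ![1, 0, 0, 0] = (1, 0)
    refine Prod.ext ?_ ?_ <;> simp [gmap15]
  · show φ₀ (Submodule.Quotient.mk ![1, 1, 1, 1]) = (-1, 1)
    show gmap15 ![1, 1, 1, 1] = (-1, 1)
    refine Prod.ext ?_ ?_ <;> simp [gmap15] <;> decide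


end
end

section
/- Let A = [[1,1,1],[1,1,1],[1,0,0]] (a 3×3 integer matrix) and A^t its transpose. Then there is no group isomorphism ρ : ℤ^3/(I−A)ℤ^3 → ℤ^3/(I−A^t)ℤ^3 such that ρ([(1,1,1)]) = [(1,1,1)]; indeed (1,1,1) ∈ (I−A)ℤ^3 while (1,1,1) ∉ (I−A^t)ℤ^3. -/
open Matrix

noncomputable section

/-- For `A = [[1,1,1],[1,1,1],[1,0,0]]`, there is no group isomorphism
`ℤ³/(I-A)ℤ³ → ℤ³/(I-Aᵗ)ℤ³` sending `[(1,1,1)]` to `[(1,1,1)]`; indeed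
`(1,1,1) ∈ (I-A)ℤ³` while `(1,1,1) ∉ (I-Aᵗ)ℤ³`. -/
theorem stmt17 :
    (¬ ∃ ρ : MQuot (1 - !![1, 1, 1; 1, 1, 1; 1, 0, (0 : ℤ)]) ≃+
             MQuot (1 - !![1, 1, 1; 1, 1, 1; 1, 0, (0 : ℤ)]ᵀ),
        ρ (Submodule.Quotient.mk ![1, 1, 1]) = Submodule.Quotient.mk ![1, 1, 1]) ∧
    ![1, 1, 1] ∈ colSpan (1 - !![1, 1, 1; 1, 1, 1; 1, 0, (0 : ℤ)]) ∧
    ![1, 1, 1] ∉ colSpan (1 - !![1, 1, 1; 1, 1, 1; 1, 0, (0 : ℤ)]ᵀ) := by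
  have hmem : ![1, 1, 1] ∈ colSpan (1 - !![1, 1, 1; 1, 1, 1; 1, 0, (0 : ℤ)]) := by
    refine ⟨![-1, -1, 0], ?_⟩
    funext i
    fin_cases i <;>
      simp [Matrix.mulVec, dotProduct, Fin.sum_univ_three, Matrix.one_apply]
  have hnot : ![1, 1, 1] ∉ colSpan (1 - !![1, 1, 1; 1, 1, 1; 1, 0, (0 : ℤ)]ᵀ) := by
    rintro ⟨x, hx⟩
    rw [show !![1, 1, 1; 1, 1, 1; 1, 0, (0 : ℤ)]ᵀ = !![1, 1, 1; 1, 1, 0; 1, 1, 0] from by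
      ext i j; fin_cases i <;> fin_cases j <;> rfl] at hx
    have h0 := congrFun hx 0
    have h1 := congrFun hx 1
    have h2 := congrFun hx 2
    simp [Matrix.mulVec, dotProduct, Fin.sum_univ_three, Matrix.one_apply,
      Matrix.transpose_apply, Matrix.vecHead, Matrix.vecTail] at h0 h1 h2
    omega
  refine ⟨?_, hmem, hnot⟩
  rintro ⟨ρ, hρ⟩
  apply hnot
  have hz : (Submodule.Quotient.mk ![1, 1, 1] :
      MQuot (1 - !![1, 1, 1; 1, 1, 1; 1, 0, (0 : ℤ)])) = 0 :=
    (Submodule.Quotient.mk_eq_zero _).2 hmem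
  rw [hz, map_zero] at hρ
  exact (Submodule.Quotient.mk_eq_zero _).1 hρ.symm


end
end
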